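/- arXiv:1812.10954 — 3 statements merged into one kernel-verified Lean document; each statement's English description precedes it below -/
import Mathlib

section
/- Let p be a real polynomial of degree k ≥ 2 and let α be a simple real root of p (p(α) = 0, p'(α) ≠ 0). Then the secant map G(x,y) = (y, (y·q(x,y) − p(y))/q(x,y)) is differentiable at the fixed point (α, α) and its total derivative there is the linear map with matrix [[0,1],[0,0]]; in particular both eigenvalues of the derivative are 0, so the fixed point (α, α) is attracting. -/
open Polynomial Filter Topology

/-- The symmetric polynomial `q(x,y) = Σ_{j=1}^k a_j Σ_{i=0}^{j-1} x^i y^{j-1-i}`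
associated to a real polynomial `p(x) = Σ_{j=0}^k a_j x^j`;
it satisfies `p(x) - p(y) = (x - y) * secQ p x y`. -/
noncomputable def secQ (p : Polynomial ℝ) (x y : ℝ) : ℝ :=
  ∑ j ∈ Finset.range (p.natDegree + 1),
    p.coeff j * ∑ i ∈ Finset.range j, x ^ i * y ^ (j - 1 - i)

/-- The secant map in extended form: `G(x,y) = (y, (y·q(x,y) − p(y))/q(x,y))`. -/
noncomputable def secG (p : Polynomial ℝ) (z : ℝ × ℝ) : ℝ × ℝ :=
  (z.2, (z.2 * secQ p z.1 z.2 - Polynomial.eval z.2 p) / secQ p z.1 z.2)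

/-! At a simple root `α`, `p (z.2) / q z` vanishes at `(α, α)` while `q (α, α) = p' α ≠ 0`, so
its derivative there is `(p' α)⁻¹ • (p' α • snd) = snd`: the Newton-type second component
`z.2 - p (z.2) / q z` of the secant map has derivative `snd - snd = 0`. -/

theorem HasFDerivAt.div_of_eq_zero {𝕜 E : Type*} [NontriviallyNormedField 𝕜]
    [NormedAddCommGroup E] [NormedSpace 𝕜 E] {c d : E → 𝕜} {c' d' : E →L[𝕜] 𝕜} {x : E}
    (hc : HasFDerivAt c c' x) (hd : HasFDerivAt d d' x) (hcx : c x = 0) (hdx : d x ≠ 0) :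
    HasFDerivAt (fun y => c y / d y) ((d x)⁻¹ • c') x := by
  have hinv : HasFDerivAt (fun y => (d y)⁻¹) (-(d x ^ 2)⁻¹ • d') x :=
    (hasDerivAt_inv hdx).comp_hasFDerivAt x hd
  simpa only [div_eq_mul_inv] using (hc.fun_mul hinv).congr_fderiv (by ext; simp [hcx])

theorem secQ_self (p : ℝ[X]) (x : ℝ) : secQ p x x = p.derivative.eval x := by
  rw [derivative_eval, sum_over_range _ (by simp)]
  refine Finset.sum_congr rfl fun j _ => ?_
  have hpow : ∀ i ∈ Finset.range j, x ^ i * x ^ (j - 1 - i) = x ^ (j - 1) := fun i hi => by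
    rw [← pow_add]
    congr 1
    have := Finset.mem_range.mp hi
    omega
  rw [Finset.sum_congr rfl hpow, Finset.sum_const, Finset.card_range, nsmul_eq_mul]
  ring

theorem differentiable_secQ (p : ℝ[X]) :
    Differentiable ℝ (fun z : ℝ × ℝ => secQ p z.1 z.2) := by
  unfold secQ
  fun_prop

theorem secG_eq_of_secQ_ne_zero (p : ℝ[X]) {z : ℝ × ℝ} (hz : secQ p z.1 z.2 ≠ 0) :
    secG p z = (z.2, z.2 - p.eval z.2 / secQ p z.1 z.2) := by
  rw [secG, sub_div, mul_div_cancel_right₀ _ hz]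

theorem secant_root_attracting_general (p : Polynomial ℝ) (α : ℝ)
    (hroot : p.eval α = 0) (hsimple : p.derivative.eval α ≠ 0) :
    HasFDerivAt (secG p) ((ContinuousLinearMap.snd ℝ ℝ ℝ).prod 0) (α, α) := by
  set Q : ℝ × ℝ → ℝ := fun z => secQ p z.1 z.2
  have hQα : Q (α, α) ≠ 0 := (secQ_self p α).trans_ne hsimple
  have hpsnd : HasFDerivAt (fun z : ℝ × ℝ => p.eval z.2)
      (p.derivative.eval α • ContinuousLinearMap.snd ℝ ℝ ℝ) (α, α) :=
    (p.hasDerivAt α).comp_hasFDerivAt (h₂ := fun x => p.eval x) (α, α) hasFDerivAt_snd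
  have hquot : HasFDerivAt (fun z => p.eval z.2 / Q z) (ContinuousLinearMap.snd ℝ ℝ ℝ) (α, α) := by
    have := hpsnd.div_of_eq_zero ((differentiable_secQ p).differentiableAt.hasFDerivAt) hroot hQα
    rwa [secQ_self, smul_smul, inv_mul_cancel₀ hsimple, one_smul] at this
  have hnewton : HasFDerivAt (fun z : ℝ × ℝ => (z.2, z.2 - p.eval z.2 / Q z))
      ((ContinuousLinearMap.snd ℝ ℝ ℝ).prod 0) (α, α) :=
    hasFDerivAt_snd.prodMk (by simpa using hasFDerivAt_snd.fun_sub hquot)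
  refine hnewton.congr_of_eventuallyEq ?_
  filter_upwards [(differentiable_secQ p).continuous.continuousAt.eventually_ne hQα] with z hz
  exact secG_eq_of_secQ_ne_zero p hz

theorem secant_root_attracting (p : Polynomial ℝ) (hp : 2 ≤ p.natDegree) (α : ℝ)
    (hroot : p.eval α = 0) (hsimple : p.derivative.eval α ≠ 0) :
    HasFDerivAt (secG p) ((ContinuousLinearMap.snd ℝ ℝ ℝ).prod 0) (α, α) :=
  secant_root_attracting_general p α hroot hsimple
end

section
/- Let p be a real polynomial of degree k ≥ 2 and let α ≠ β be simple real roots of p. Let m ∈ ℝ satisfy p'(α) − p'(β)·m ≠ 0. Then along the line through the focal point (α, β) of slope m, the second component of the secant map has a finite limit: as t → 0 with t ≠ 0, ( (β + m t)·q(α + t, β + m t) − p(β + m t) ) / q(α + t, β + m t) converges to y(m) = (β·p'(α) − α·p'(β)·m)/(p'(α) − p'(β)·m). -/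
open Polynomial Filter Topology

/-! Off the diagonal the secant map sends `(x, y)` to `(y p(x) - x p(y)) / (p(x) - p(y))`.
Along a curve `t ↦ (u t, v t)` through the focal point `(α, β)`, dividing numerator and
denominator by `t` turns both into difference quotients of `p ∘ u` and `p ∘ v`, whose limits
are `p'(α) u'(0)` and `p'(β) v'(0)`. -/

theorem sub_mul_secQ (p : Polynomial ℝ) (x y : ℝ) :
    (x - y) * secQ p x y = p.eval x - p.eval y := by
  rw [secQ, p.eval_eq_sum_range, p.eval_eq_sum_range, ← Finset.sum_sub_distrib, Finset.mul_sum]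
  refine Finset.sum_congr rfl fun j _ => ?_
  rw [← mul_sub, mul_comm (x - y), mul_assoc, geom_sum₂_mul]

theorem secant_eq_div_sub_of_ne (p : Polynomial ℝ) {x y : ℝ} (hxy : x ≠ y) :
    (y * secQ p x y - p.eval y) / secQ p x y =
      (y * p.eval x - x * p.eval y) / (p.eval x - p.eval y) := by
  have hxy' : x - y ≠ 0 := sub_ne_zero.mpr hxy
  rw [← mul_div_mul_left _ _ hxy', sub_mul_secQ]
  congr 1
  linear_combination y * sub_mul_secQ p x y

theorem HasDerivAt.tendsto_div_self {f : ℝ → ℝ} {f' : ℝ} (hf : HasDerivAt f f' 0)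
    (hf0 : f 0 = 0) : Tendsto (fun t => f t / t) (𝓝[≠] 0) (𝓝 f') := by
  simpa [hf0, div_eq_inv_mul] using hf.tendsto_slope_zero

theorem tendsto_secant_of_hasDerivAt (p : Polynomial ℝ) {u v : ℝ → ℝ} {u' v' α β : ℝ}
    (hu : HasDerivAt u u' 0) (hv : HasDerivAt v v' 0) (hu0 : u 0 = α) (hv0 : v 0 = β)
    (hαβ : α ≠ β) (hα : p.eval α = 0) (hβ : p.eval β = 0)
    (hD : p.derivative.eval α * u' - p.derivative.eval β * v' ≠ 0) :
    Tendsto (fun t => (v t * secQ p (u t) (v t) - p.eval (v t)) / secQ p (u t) (v t))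
      (𝓝[≠] 0)
      (𝓝 ((β * (p.derivative.eval α * u') - α * (p.derivative.eval β * v')) /
        (p.derivative.eval α * u' - p.derivative.eval β * v'))) := by
  subst hu0 hv0
  have hpu := ((p.hasDerivAt (u 0)).comp 0 hu).tendsto_div_self hα
  have hpv := ((p.hasDerivAt (v 0)).comp 0 hv).tendsto_div_self hβ
  have hu_lim := hu.continuousAt.tendsto.mono_left (nhdsWithin_le_nhds (s := {0}ᶜ))
  have hv_lim := hv.continuousAt.tendsto.mono_left (nhdsWithin_le_nhds (s := {0}ᶜ))
  have hlim := ((hv_lim.mul hpu).sub (hu_lim.mul hpv)).div (hpu.sub hpv) hD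
  have hoff_diag : ∀ᶠ t in 𝓝[≠] 0, u t ≠ v t :=
    (hu_lim.prodMk_nhds hv_lim).eventually (isOpen_ne_fun continuous_fst continuous_snd
      |>.mem_nhds hαβ)
  refine hlim.congr' ?_
  filter_upwards [hoff_diag, self_mem_nhdsWithin] with t huv (ht : t ≠ 0)
  rw [secant_eq_div_sub_of_ne p huv]
  simp only [Pi.div_apply, Function.comp_apply]
  field_simp

theorem secant_focal_slope_limit_general (p : Polynomial ℝ) (α β m : ℝ)
    (hαβ : α ≠ β) (hα : p.eval α = 0) (hβ : p.eval β = 0)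
    (hm : p.derivative.eval α - p.derivative.eval β * m ≠ 0) :
    Tendsto (fun t =>
        ((β + m * t) * secQ p (α + t) (β + m * t) - p.eval (β + m * t)) /
          secQ p (α + t) (β + m * t))
      (𝓝[≠] 0)
      (𝓝 ((β * p.derivative.eval α - α * p.derivative.eval β * m) /
        (p.derivative.eval α - p.derivative.eval β * m))) := by
  have hu : HasDerivAt (fun t : ℝ => α + t) 1 0 := (hasDerivAt_id 0).const_add α
  have hv : HasDerivAt (fun t : ℝ => β + m * t) m 0 := by
    simpa using ((hasDerivAt_id (0 : ℝ)).const_mul m).const_add β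
  have h := tendsto_secant_of_hasDerivAt p hu hv (by simp) (by simp) hαβ hα hβ
    (by rwa [mul_one])
  convert h using 3 <;> ring

theorem secant_focal_slope_limit (p : Polynomial ℝ) (hp : 2 ≤ p.natDegree) (α β m : ℝ)
    (hαβ : α ≠ β) (hα : p.eval α = 0) (hβ : p.eval β = 0)
    (hα' : p.derivative.eval α ≠ 0) (hβ' : p.derivative.eval β ≠ 0)
    (hm : p.derivative.eval α - p.derivative.eval β * m ≠ 0) :
    Tendsto (fun t =>
        ((β + m * t) * secQ p (α + t) (β + m * t) - p.eval (β + m * t)) /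
          secQ p (α + t) (β + m * t))
      (𝓝[≠] 0)
      (𝓝 ((β * p.derivative.eval α - α * p.derivative.eval β * m) /
        (p.derivative.eval α - p.derivative.eval β * m))) :=
  secant_focal_slope_limit_general p α β m hαβ hα hβ hm
end

section
/- There exist a real polynomial p and real numbers a < b < c < d with q(a,b), q(b,d), q(d,c), q(c,a) all nonzero (q being the symmetric polynomial with p(x) − p(y) = (x−y)q(x,y)), such that the secant map S_p has the periodic orbit of minimal period four (a,b) ↦ (b,d) ↦ (d,c) ↦ (c,a) ↦ (a,b) (i.e., sec(a,b) = d, sec(b,d) = c, sec(d,c) = a, sec(c,a) = b), and moreover this orbit is attracting: the product Λ = DS(a,b)·DS(b,d)·DS(d,c)·DS(c,a) of the Jacobian matrices of S along the orbit satisfies det Λ = 0 and |trace Λ| < 1, so both eigenvalues of Λ have modulus strictly less than 1. -/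
open Polynomial Filter Topology

/-- Partial derivative of `secQ` in the first variable. -/
noncomputable def secQx (p : Polynomial ℝ) (x y : ℝ) : ℝ := deriv (fun t => secQ p t y) x

/-- Partial derivative of `secQ` in the second variable. -/
noncomputable def secQy (p : Polynomial ℝ) (x y : ℝ) : ℝ := deriv (fun t => secQ p x t) y

/-- The Jacobian matrix of the secant map at a point where `secQ p x y ≠ 0`:
`DS(x,y) = [[0,1],[A(x,y),B(x,y)]]` with `A = p(y)·q_x/q²` and `B = p(x)·q_y/q²`. -/
noncomputable def secDS (p : Polynomial ℝ) (x y : ℝ) : Matrix (Fin 2) (Fin 2) ℝ :=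
  !![0, 1;
     Polynomial.eval y p * secQx p x y / (secQ p x y) ^ 2,
     Polynomial.eval x p * secQy p x y / (secQ p x y) ^ 2]

/-!
For `x ≠ y`, `secQ p x y` is the slope of the chord of the graph of `p` between `x` and `y`. Hence,
where this slope is nonzero, `sec(x, y) = z` says exactly that `(x, p x)`, `(y, p y)` and `(z, 0)`
are collinear, and the entries of `DS(x, y)` only involve the values of `p` and `p'` at `x` and `y`.
Normalising `(a, b, c) = (0, 1, 2)`, collinearity around the four-cycle forces `d² - 6d + 4 = 0`,
i.e. `d = 3 + √5`, and fixes `p(a), p(b), p(c), p(d)` up to a common factor. Choosing `p'(0)` equal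
to the chord slope `q(0, 1)` kills `∂q/∂x (0, 1)`, so `DS(0, 1)` is singular and `det Λ = 0`; a
quintic leaves one more free coefficient, chosen so that `trace Λ ≈ 0.066`.
-/

section SecantMap

variable (p : ℝ[X]) {x y : ℝ}

theorem sub_eq_mul_secQ (x y : ℝ) : p.eval x - p.eval y = (x - y) * secQ p x y := by
  rw [eval_eq_sum_range, eval_eq_sum_range, ← Finset.sum_sub_distrib, secQ, Finset.mul_sum]
  refine Finset.sum_congr rfl fun j _ => ?_
  rw [← mul_sub, ← geom_sum₂_mul]
  ring

theorem secQ_eq_div (h : x ≠ y) : secQ p x y = (p.eval x - p.eval y) / (x - y) := by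
  rw [sub_eq_mul_secQ, mul_div_cancel_left₀ _ (sub_ne_zero.2 h)]

theorem secQ_ne_zero (h : x ≠ y) (hp : p.eval x ≠ p.eval y) : secQ p x y ≠ 0 := by
  rw [secQ_eq_div p h]
  exact div_ne_zero (sub_ne_zero.2 hp) (sub_ne_zero.2 h)

theorem secant_eq_iff_collinear (h : x ≠ y) (hq : secQ p x y ≠ 0) (z : ℝ) :
    (y * secQ p x y - p.eval y) / secQ p x y = z ↔ p.eval x * (y - z) = p.eval y * (x - z) := by
  have key : p.eval x * (y - z) - p.eval y * (x - z)
      = (x - y) * (y * secQ p x y - p.eval y - z * secQ p x y) := by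
    linear_combination (y - z) * sub_eq_mul_secQ p x y
  rw [div_eq_iff hq, ← sub_eq_zero (a := p.eval x * _), key, mul_eq_zero,
    or_iff_right (sub_ne_zero.2 h)]
  exact sub_eq_zero.symm

theorem hasDerivAt_secQ_left (h : x ≠ y) :
    HasDerivAt (secQ p · y) ((p.derivative.eval x - secQ p x y) / (x - y)) x := by
  have hxy : x - y ≠ 0 := sub_ne_zero.2 h
  have hquot := ((p.hasDerivAt x).sub_const (p.eval y)).div ((hasDerivAt_id' x).sub_const y) hxy
  have heq : (fun t => (p.eval t - p.eval y) / (t - y)) =ᶠ[𝓝 x] (secQ p · y) := by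
    filter_upwards [isOpen_ne.mem_nhds h] with t ht using (secQ_eq_div p ht).symm
  refine (hquot.congr_of_eventuallyEq heq.symm).congr_deriv ?_
  rw [secQ_eq_div p h]
  field_simp

theorem hasDerivAt_secQ_right (h : x ≠ y) :
    HasDerivAt (secQ p x ·) ((secQ p x y - p.derivative.eval y) / (x - y)) y := by
  have hxy : x - y ≠ 0 := sub_ne_zero.2 h
  have hquot := ((p.hasDerivAt y).const_sub (p.eval x)).div ((hasDerivAt_id' y).const_sub x) hxy
  have heq : (fun t => (p.eval x - p.eval t) / (x - t)) =ᶠ[𝓝 y] (secQ p x ·) := by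
    filter_upwards [isOpen_ne.mem_nhds h.symm] with t ht using (secQ_eq_div p ht.symm).symm
  refine (hquot.congr_of_eventuallyEq heq.symm).congr_deriv ?_
  rw [secQ_eq_div p h]
  field_simp
  ring

theorem secDS_of_ne (h : x ≠ y) : secDS p x y =
    !![0, 1;
      p.eval y * (p.derivative.eval x - secQ p x y) / ((x - y) * secQ p x y ^ 2),
      p.eval x * (secQ p x y - p.derivative.eval y) / ((x - y) * secQ p x y ^ 2)] := by
  rw [secDS, secQx, secQy, (hasDerivAt_secQ_left p h).deriv, (hasDerivAt_secQ_right p h).deriv]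
  simp only [mul_div_assoc', div_div, mul_comm (x - y)]

theorem secant_step_of_collinear {z : ℝ} (h : x ≠ y) (hp : p.eval x ≠ p.eval y)
    (hcol : p.eval x * (y - z) = p.eval y * (x - z)) :
    secQ p x y ≠ 0 ∧ (y * secQ p x y - p.eval y) / secQ p x y = z :=
  have hq := secQ_ne_zero p h hp
  ⟨hq, (secant_eq_iff_collinear p h hq z).2 hcol⟩

end SecantMap

section PeriodFour

theorem sqrt_five_sq : √5 ^ 2 = 5 := Real.sq_sqrt (by norm_num)

theorem sqrt_five_gt : 2.236 < √5 := by nlinarith [sqrt_five_sq, Real.sqrt_nonneg 5]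

theorem sqrt_five_lt : √5 < 2.2361 := by nlinarith [sqrt_five_sq, Real.sqrt_nonneg 5]

noncomputable def periodFourPoly : ℝ[X] :=
  C 136 * X ^ 5 + C (-1896 + 404 * √5) * X ^ 4 + C (4601 - 1347 * √5) * X ^ 3 +
    C (-2841 + 943 * √5) * X ^ 2 + C (-810 + 270 * √5) * X + C 1080

theorem natDegree_periodFourPoly : periodFourPoly.natDegree = 5 := by
  unfold periodFourPoly
  compute_degree!

theorem eval_periodFourPoly (x : ℝ) : periodFourPoly.eval x =
    136 * x ^ 5 + (-1896 + 404 * √5) * x ^ 4 + (4601 - 1347 * √5) * x ^ 3 +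
      (-2841 + 943 * √5) * x ^ 2 + (-810 + 270 * √5) * x + 1080 := by
  simp [periodFourPoly]

theorem eval_derivative_periodFourPoly (x : ℝ) : periodFourPoly.derivative.eval x =
    680 * x ^ 4 + 4 * (-1896 + 404 * √5) * x ^ 3 + 3 * (4601 - 1347 * √5) * x ^ 2 +
      2 * (-2841 + 943 * √5) * x + (-810 + 270 * √5) := by
  simp [periodFourPoly]
  ring

theorem periodFourPoly_eval_zero : periodFourPoly.eval 0 = 1080 := by
  simp [eval_periodFourPoly]

theorem periodFourPoly_eval_one : periodFourPoly.eval 1 = 270 + 270 * √5 := by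
  rw [eval_periodFourPoly]; ring

theorem periodFourPoly_eval_two : periodFourPoly.eval 2 = -1080 := by
  rw [eval_periodFourPoly]; ring

theorem periodFourPoly_eval_three_add_sqrt_five :
    periodFourPoly.eval (3 + √5) = -1620 - 540 * √5 := by
  have := sqrt_five_sq
  rw [eval_periodFourPoly]; grind

theorem secDS_periodFourPoly_zero_one :
    secDS periodFourPoly 0 1 = !![0, 1; 0, 217 / 270 - 61 / 270 * √5] := by
  have := sqrt_five_sq
  rw [secDS_of_ne _ zero_ne_one, secQ_eq_div _ zero_ne_one, periodFourPoly_eval_zero,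
    periodFourPoly_eval_one, eval_derivative_periodFourPoly, eval_derivative_periodFourPoly]
  congr 5 <;> grind

theorem secDS_periodFourPoly_one_three_add_sqrt_five :
    secDS periodFourPoly 1 (3 + √5) =
      !![0, 1; -1349 / 270 + 5 / 2 * √5, 547 / 135 + 271 / 45 * √5] := by
  have := sqrt_five_sq
  have h : (1 : ℝ) ≠ 3 + √5 := by linarith [Real.sqrt_nonneg 5]
  rw [secDS_of_ne _ h, secQ_eq_div _ h, periodFourPoly_eval_three_add_sqrt_five,
    periodFourPoly_eval_one, eval_derivative_periodFourPoly, eval_derivative_periodFourPoly]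
  congr 5 <;> grind

theorem secDS_periodFourPoly_three_add_sqrt_five_two :
    secDS periodFourPoly (3 + √5) 2 =
      !![0, 1; -9913 / 270 - 4481 / 270 * √5, -91 / 45 - 676 / 135 * √5] := by
  have := sqrt_five_sq
  have h : 3 + √5 ≠ 2 := by linarith [Real.sqrt_nonneg 5]
  rw [secDS_of_ne _ h, secQ_eq_div _ h, periodFourPoly_eval_three_add_sqrt_five,
    periodFourPoly_eval_two, eval_derivative_periodFourPoly, eval_derivative_periodFourPoly]
  congr 5 <;> grind

theorem secDS_periodFourPoly_two_zero :
    secDS periodFourPoly 2 0 = !![0, 1; -2837 / 1080 + 403 / 1080 * √5, 1 / 8 + 1 / 8 * √5] := by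
  have := sqrt_five_sq
  rw [secDS_of_ne _ two_ne_zero, secQ_eq_div _ two_ne_zero, periodFourPoly_eval_two,
    periodFourPoly_eval_zero, eval_derivative_periodFourPoly, eval_derivative_periodFourPoly]
  congr 5 <;> grind

theorem trace_secDS_periodFourPoly_cycle :
    (secDS periodFourPoly 0 1 * secDS periodFourPoly 1 (3 + √5) *
      secDS periodFourPoly (3 + √5) 2 * secDS periodFourPoly 2 0).trace =
      431055149 / 2460375 - 770805041 / 9841500 * √5 := by
  have := sqrt_five_sq
  rw [secDS_periodFourPoly_zero_one, secDS_periodFourPoly_one_three_add_sqrt_five,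
    secDS_periodFourPoly_three_add_sqrt_five_two, secDS_periodFourPoly_two_zero,
    Matrix.mul_fin_two, Matrix.mul_fin_two, Matrix.mul_fin_two, Matrix.trace_fin_two_of]
  grind

end PeriodFour

/-- There is a polynomial whose secant map has an attracting periodic orbit of
minimal period four. -/
theorem secant_attracting_period_four :
    ∃ (p : Polynomial ℝ) (a b c d : ℝ),
      2 ≤ p.natDegree ∧
      a < b ∧ b < c ∧ c < d ∧
      secQ p a b ≠ 0 ∧ secQ p b d ≠ 0 ∧ secQ p d c ≠ 0 ∧ secQ p c a ≠ 0 ∧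
      (b * secQ p a b - p.eval b) / secQ p a b = d ∧
      (d * secQ p b d - p.eval d) / secQ p b d = c ∧
      (c * secQ p d c - p.eval c) / secQ p d c = a ∧
      (a * secQ p c a - p.eval a) / secQ p c a = b ∧
      (secDS p a b * secDS p b d * secDS p d c * secDS p c a).det = 0 ∧
      |(secDS p a b * secDS p b d * secDS p d c * secDS p c a).trace| < 1 := by
  have := sqrt_five_sq
  have := sqrt_five_gt
  have := sqrt_five_lt
  have hd : (1 : ℝ) ≠ 3 + √5 := by linarith
  obtain ⟨hab, sec_ab⟩ := secant_step_of_collinear periodFourPoly (z := 3 + √5) zero_ne_one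
    (by rw [periodFourPoly_eval_zero, periodFourPoly_eval_one]; linarith)
    (by rw [periodFourPoly_eval_zero, periodFourPoly_eval_one]; grind)
  obtain ⟨hbd, sec_bd⟩ := secant_step_of_collinear periodFourPoly (z := 2) hd
    (by rw [periodFourPoly_eval_one, periodFourPoly_eval_three_add_sqrt_five]; linarith)
    (by rw [periodFourPoly_eval_one, periodFourPoly_eval_three_add_sqrt_five]; grind)
  obtain ⟨hdc, sec_dc⟩ := secant_step_of_collinear periodFourPoly (x := 3 + √5) (y := 2) (z := 0) (by linarith)
    (by rw [periodFourPoly_eval_three_add_sqrt_five, periodFourPoly_eval_two]; linarith)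
    (by rw [periodFourPoly_eval_three_add_sqrt_five, periodFourPoly_eval_two]; grind)
  obtain ⟨hca, sec_ca⟩ := secant_step_of_collinear periodFourPoly (z := 1) two_ne_zero
    (by rw [periodFourPoly_eval_two, periodFourPoly_eval_zero]; norm_num)
    (by rw [periodFourPoly_eval_two, periodFourPoly_eval_zero]; norm_num)
  refine ⟨periodFourPoly, 0, 1, 2, 3 + √5, by simp [natDegree_periodFourPoly], by norm_num,
    by norm_num, by linarith, hab, hbd, hdc, hca, sec_ab, sec_bd, sec_dc, sec_ca, ?_, ?_⟩
  · rw [Matrix.det_mul, Matrix.det_mul, Matrix.det_mul, secDS_periodFourPoly_zero_one]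
    simp
  · rw [trace_secDS_periodFourPoly_cycle, abs_lt]
    constructor <;> linarith
end
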